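/- Let R be a path scenario and π an optimal ride with leftIdx(π) < rightIdx(π). Then the ride s₀ ↦ r̂m(π) ↦ left(R) ↦ r̂m(π) followed by π[r̂mIdx(π), len(π)] is also an optimal ride for R. -/

import Mathlib

namespace RideSharing

/-- A ride in a graph with adjacency `adj`: a nonempty sequence of nodes where
consecutive nodes are adjacent. -/
def IsRide (adj : ℕ → ℕ → Prop) (π : List ℕ) : Prop :=
  π ≠ [] ∧ π.Chain' adj

/-- The cost of a ride: sum of the weights of traversed edges. -/
def cost (w : ℕ → ℕ → ℚ) : List ℕ → ℚ
  | [] => 0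
  | [_] => 0
  | a :: b :: rest => w a b + cost w (b :: rest)

/-- A ride satisfies a request `(s,t)` if `s` occurs at a time step weakly before
an occurrence of `t`. -/
def Satisfies (π : List ℕ) (s t : ℕ) : Prop :=
  ∃ i j : ℕ, i ≤ j ∧ π[i]? = some s ∧ π[j]? = some t

/-- `Pre π' π` : `π'` is obtained from `π` by (repeatedly) removing a contiguous
subsequence of nodes (the relation `π' ⪯ π` of the paper, stated with 0-based indices:
`π[1,i] , π[i',len]` becomes `π.take (i+1) ++ π.drop i'`). -/
inductive Pre : List ℕ → List ℕ → Prop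
  | refl (π : List ℕ) : Pre π π
  | step (π' π : List ℕ) (i i' : ℕ) :
      i < i' → i' < π.length →
      (π[i + 1]? = π[i']? ∨ π[i]? = π[i' - 1]?) →
      Pre π' (π.take (i + 1) ++ π.drop i') → Pre π' π

/-- A ride-sharing scenario. -/
structure Scenario where
  adj : ℕ → ℕ → Prop
  w : ℕ → ℕ → ℚ
  s0 : ℕ
  t0 : ℕ
  C : Finset (ℕ × ℕ)

def Feasible (R : Scenario) (π : List ℕ) : Prop :=
  IsRide R.adj π ∧ π.head? = some R.s0 ∧ π.getLast? = some R.t0 ∧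
    ∀ r ∈ R.C, Satisfies π r.1 r.2

def Optimal (R : Scenario) (π : List ℕ) : Prop :=
  Feasible R π ∧ ∀ π', Feasible R π' → cost R.w π ≤ cost R.w π'

/-- The set `V_C` of endpoints of requests. -/
def VC (C : Finset (ℕ × ℕ)) : Finset ℕ := C.image Prod.fst ∪ C.image Prod.snd

/-- The path graph on `{1,…,n}`. -/
def pathAdj (n : ℕ) (a b : ℕ) : Prop :=
  (b = a + 1 ∨ a = b + 1) ∧ 1 ≤ a ∧ a ≤ n ∧ 1 ≤ b ∧ b ≤ n

/-- The monotone segment of the path from `x` to `y`. -/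
def seg (x y : ℕ) : List ℕ :=
  if x ≤ y then (List.range (y - x + 1)).map (fun k => x + k)
  else (List.range (x - y + 1)).map (fun k => x - k)

/-- The ride through a list of waypoints, concatenating monotone segments. -/
def rideThrough : List ℕ → List ℕ
  | [] => []
  | [x] => [x]
  | x :: y :: rest => seg x y ++ (rideThrough (y :: rest)).tail

/-- Concatenation of rides (`π ↦ π'`), inserting the monotone connecting segment
if the endpoints differ. -/
def rconcat (a b : List ℕ) : List ℕ :=
  a ++ (seg (a.getLastD 0) (b.headD 0)).tail ++ b.tail

/-- `leftIdx(π)`: first time step at which `π` reaches `L = left(R)`. -/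
def leftIdx (π : List ℕ) (L : ℕ) : ℕ := π.idxOf L

/-- `rm(π) = max_{1 ≤ i ≤ leftIdx(π)} π_i`. -/
def rm (π : List ℕ) (L : ℕ) : ℕ := (π.take (leftIdx π L + 1)).foldr max 0

/-- `rmIdx(π)`: first time step `i ≥ leftIdx(π)` with `π_i = rm(π)`. -/
def rmIdx (π : List ℕ) (L : ℕ) : ℕ :=
  leftIdx π L + (π.drop (leftIdx π L)).idxOf (rm π L)

/-- `rmLastIdx(π)`: last time step `i ≤ rightIdx(π)` with `π_i = rm(π)`. -/
def rmLastIdx (π : List ℕ) (L Rt : ℕ) : ℕ :=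
  π.idxOf Rt - (π.take (π.idxOf Rt + 1)).reverse.idxOf (rm π L)

/-- `r̂m(π) = max_{rmIdx(π) ≤ i ≤ rmLastIdx(π)} π_i`. -/
def rmHat (π : List ℕ) (L Rt : ℕ) : ℕ :=
  ((π.drop (rmIdx π L)).take (rmLastIdx π L Rt - rmIdx π L + 1)).foldr max 0

/-- `r̂mIdx(π)`: first time step `i ≥ rmLastIdx(π)` with `π_i = r̂m(π)`. -/
def rmHatIdx (π : List ℕ) (L Rt : ℕ) : ℕ :=
  rmLastIdx π L Rt + (π.drop (rmLastIdx π L Rt)).idxOf (rmHat π L Rt)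

/-!
On a path, a walk between two nodes costs at least the monotone segment joining them. Up to time
`r̂mIdx(π)` the ride `π` moves from `s₀` to `rm(π)`, down to `left(R)`, up to `r̂m(π)`, down to
`rm(π)` and up to `r̂m(π)` again. As `s₀, left(R) ≤ rm(π) ≤ r̂m(π)`, the segment bounds for these
five legs add up to the cost of `s₀ ↦ r̂m(π) ↦ left(R) ↦ r̂m(π)`.

A unit-step walk cannot pass a value without taking it, and `rmIdx`, `r̂mIdx` are first hitting
times; hence `π` stays weakly below `r̂m(π)` up to `r̂mIdx(π)`. A request with an endpoint above
`r̂m(π)` is therefore served by the part of `π` that is kept, and a request with both endpoints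
in `[left(R), r̂m(π)]` by the new prefix, which sweeps that interval downwards and then upwards.
-/

section ListLemmas

variable {α : Type*}

theorem getD_idxOf_of_mem [BEq α] [LawfulBEq α] {l : List α} {v d : α} (h : v ∈ l) :
    l.getD (l.idxOf v) d = v := by
  rw [List.getD_eq_getElem _ _ (List.idxOf_lt_length_iff.2 h), List.getElem_idxOf]

theorem idxOf_le_of_getD_eq [BEq α] [LawfulBEq α] {l : List α} {v d : α} {p : ℕ}
    (hp : p < l.length) (h : l.getD p d = v) : l.idxOf v ≤ p := by
  rw [List.getD_eq_getElem _ _ hp] at h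
  have hv : v ∈ l.take (p + 1) := List.mem_take_iff_getElem.2 ⟨p, by omega, h⟩
  have := (List.mem_take_iff_idxOf_lt (List.mem_of_mem_take hv)).1 hv
  omega

theorem getD_drop (l : List α) (d : α) (i j : ℕ) : (l.drop i).getD j d = l.getD (i + j) d := by
  simp only [List.getD_eq_getElem?_getD, List.getElem?_drop]

theorem add_idxOf_drop_le [BEq α] [LawfulBEq α] {l : List α} {v d : α} {i p : ℕ}
    (hip : i ≤ p) (hp : p < l.length) (h : l.getD p d = v) :
    i + (l.drop i).idxOf v ≤ p := by
  have := idxOf_le_of_getD_eq (l := l.drop i) (v := v) (p := p - i)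
    (by rw [List.length_drop]; omega) (by rwa [getD_drop, Nat.add_sub_cancel' hip])
  omega

theorem getD_add_idxOf_drop [BEq α] [LawfulBEq α] {l : List α} {v d : α} {i p : ℕ}
    (hip : i ≤ p) (hp : p < l.length) (h : l.getD p d = v) :
    l.getD (i + (l.drop i).idxOf v) d = v := by
  rw [← getD_drop]
  rw [List.getD_eq_getElem _ _ hp] at h
  exact getD_idxOf_of_mem <| List.mem_drop_iff_getElem.2
    ⟨p - i, by omega, by simp only [Nat.add_sub_cancel' hip]; exact h⟩

theorem getD_reverse_take (l : List α) (d : α) {r j : ℕ} (hr : r < l.length) (hj : j ≤ r) :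
    (l.take (r + 1)).reverse.getD j d = l.getD (r - j) d := by
  rw [List.getD_eq_getElem _ _ (by simp only [List.length_reverse, List.length_take]; omega),
    List.getElem_reverse, List.getElem_take,
    List.getD_eq_getElem _ _ (by omega)]
  congr 1
  simp only [List.length_take]
  omega

theorem idxOf_reverse_take_le [BEq α] [LawfulBEq α] {l : List α} {v d : α} {p r : ℕ}
    (hpr : p ≤ r) (hr : r < l.length) (h : l.getD p d = v) :
    (l.take (r + 1)).reverse.idxOf v ≤ r - p :=
  idxOf_le_of_getD_eq (by simp only [List.length_reverse, List.length_take]; omega)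
    (by rwa [getD_reverse_take l d hr (by omega), Nat.sub_sub_self hpr])

theorem le_sub_idxOf_reverse_take [BEq α] [LawfulBEq α] {l : List α} {v d : α} {p r : ℕ}
    (hpr : p ≤ r) (hr : r < l.length) (h : l.getD p d = v) :
    p ≤ r - (l.take (r + 1)).reverse.idxOf v := by
  have := idxOf_reverse_take_le hpr hr h
  omega

theorem getD_sub_idxOf_reverse_take [BEq α] [LawfulBEq α] {l : List α} {v d : α} {p r : ℕ}
    (hpr : p ≤ r) (hr : r < l.length) (h : l.getD p d = v) :
    l.getD (r - (l.take (r + 1)).reverse.idxOf v) d = v := by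
  have := idxOf_reverse_take_le hpr hr h
  rw [← getD_reverse_take l d hr (by omega)]
  rw [List.getD_eq_getElem _ _ (by omega)] at h
  exact getD_idxOf_of_mem (List.mem_reverse.2 (List.mem_take_iff_getElem.2 ⟨p, by omega, h⟩))

theorem mem_take_drop_iff {l : List α} {d x : α} {i j : ℕ} (hij : i ≤ j) (hj : j < l.length) :
    x ∈ (l.drop i).take (j - i + 1) ↔ ∃ q, i ≤ q ∧ q ≤ j ∧ l.getD q d = x := by
  rw [List.mem_take_iff_getElem]
  constructor
  · rintro ⟨k, hk, rfl⟩
    simp only [List.length_drop] at hk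
    refine ⟨i + k, by omega, by omega, ?_⟩
    rw [List.getD_eq_getElem _ _ (by omega), List.getElem_drop]
  · rintro ⟨q, hiq, hqj, rfl⟩
    refine ⟨q - i, by simp only [List.length_drop]; omega, ?_⟩
    rw [List.getD_eq_getElem _ _ (by omega), List.getElem_drop]
    simp only [Nat.add_sub_cancel' hiq]

end ListLemmas

theorem foldr_max_mem {l : List ℕ} (h : l ≠ []) : l.foldr max 0 ∈ l :=
  List.maximum_mem (List.foldr_max_of_ne_nil h).symm

theorem le_foldr_max {l : List ℕ} {x : ℕ} (h : x ∈ l) : x ≤ l.foldr max 0 :=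
  List.le_max_of_le h le_rfl

theorem getD_le_foldr_max_take_drop {l : List ℕ} {i q j : ℕ} (hiq : i ≤ q) (hqj : q ≤ j)
    (hj : j < l.length) : l.getD q 0 ≤ ((l.drop i).take (j - i + 1)).foldr max 0 :=
  le_foldr_max ((mem_take_drop_iff (hiq.trans hqj) hj).2 ⟨q, hiq, hqj, rfl⟩)

theorem exists_getD_eq_foldr_max_take_drop {l : List ℕ} {i j : ℕ} (hij : i ≤ j)
    (hj : j < l.length) :
    ∃ q, i ≤ q ∧ q ≤ j ∧ l.getD q 0 = ((l.drop i).take (j - i + 1)).foldr max 0 :=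
  (mem_take_drop_iff hij hj).1 (foldr_max_mem fun hnil => by
    simpa [hnil] using (mem_take_drop_iff (d := 0) hij hj).2 ⟨j, hij, le_rfl, rfl⟩)

section Glue

variable {α : Type*} {a b : List α}

theorem append_tail_eq_dropLast_append (h : a.getLast? = b.head?) :
    a ++ b.tail = a.dropLast ++ b := by
  cases b with
  | nil => simp_all
  | cons x b =>
    conv_lhs => rw [← List.dropLast_append_getLast? (l := a) (a := x) h]
    simp

theorem head?_append_tail (h : a.getLast? = b.head?) : (a ++ b.tail).head? = a.head? := by
  cases a <;> cases b <;> simp_all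

theorem getLast?_append_tail (h : a.getLast? = b.head?) :
    (a ++ b.tail).getLast? = b.getLast? := by
  rw [append_tail_eq_dropLast_append h]
  cases b <;> simp_all [List.getLast?_eq_some_getLast]

theorem isChain_append_tail {R : α → α → Prop} (h : a.getLast? = b.head?) (ha : a.IsChain R)
    (hb : b.IsChain R) : (a ++ b.tail).IsChain R := by
  cases b with
  | nil => simpa using ha
  | cons x b =>
    refine ha.append hb.tail fun u hu v hv => ?_
    rw [h, List.head?_cons, Option.mem_some_iff] at hu
    exact hu ▸ List.isChain_cons.1 hb |>.1 v hv

theorem getLast?_take_succ {l : List α} {d : ℕ} (hd : d < l.length) :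
    (l.take (d + 1)).getLast? = some l[d] := by
  rw [List.getLast?_take, if_neg (by omega), Nat.add_sub_cancel, List.getElem?_eq_getElem hd]
  rfl

end Glue

theorem cost_append_tail (w : ℕ → ℕ → ℚ) : ∀ {a b : List ℕ}, a.getLast? = b.head? →
    cost w (a ++ b.tail) = cost w a + cost w b
  | [], [], _ => by simp [cost]
  | [x], b, h => by
    cases b with
    | nil => simp at h
    | cons y b =>
      obtain rfl : x = y := by simpa using h
      simp [cost]
  | x :: y :: a, b, h => by
    show w x y + cost w ((y :: a) ++ b.tail) = (w x y + cost w (y :: a)) + cost w b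
    rw [cost_append_tail w (by simpa using h), add_assoc]

theorem cost_reverse {w : ℕ → ℕ → ℚ} (hsym : ∀ a b, w a b = w b a) :
    ∀ l : List ℕ, cost w l.reverse = cost w l
  | [] | [_] => rfl
  | x :: y :: l => by
    have hglue : (y :: l).reverse.getLast? = [y, x].head? := by simp
    rw [show (x :: y :: l).reverse = (y :: l).reverse ++ [y, x].tail by simp,
      cost_append_tail w hglue, cost_reverse hsym (y :: l), cost, cost, cost, hsym]
    ring

theorem cost_take_succ (w : ℕ → ℕ → ℚ) {l : List ℕ} :
    ∀ {d : ℕ}, d < l.length →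
      cost w (l.take (d + 1)) = ∑ p ∈ Finset.range d, w (l.getD p 0) (l.getD (p + 1) 0)
  | 0, hd => by
    rw [List.take_add_one, List.take_zero, List.getElem?_eq_getElem hd]
    simp [cost]
  | d + 1, hd => by
    have hsplit : l.take (d + 2) = l.take (d + 1) ++ [l[d], l[d + 1]].tail := by
      rw [List.take_add_one (i := d + 1), List.getElem?_eq_getElem hd]; rfl
    have hglue : (l.take (d + 1)).getLast? = [l[d], l[d + 1]].head? := getLast?_take_succ _
    rw [hsplit, cost_append_tail w hglue, cost_take_succ w (by omega), Finset.sum_range_succ,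
      List.getD_eq_getElem _ _ (by omega : d < l.length), List.getD_eq_getElem _ _ hd]
    simp [cost]

section Satisfies

variable {a b l : List ℕ} {s t : ℕ}

theorem Satisfies.append_right (h : Satisfies a s t) (b : List ℕ) : Satisfies (a ++ b) s t := by
  obtain ⟨i, j, hij, hi, hj⟩ := h
  exact ⟨i, j, hij, by rw [List.getElem?_append_left (List.getElem?_eq_some_iff.1 hi).1, hi],
    by rw [List.getElem?_append_left (List.getElem?_eq_some_iff.1 hj).1, hj]⟩

theorem Satisfies.append_left (h : Satisfies b s t) (a : List ℕ) : Satisfies (a ++ b) s t := by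
  obtain ⟨i, j, hij, hi, hj⟩ := h
  exact ⟨a.length + i, a.length + j, by omega,
    by rwa [List.getElem?_append_right (by omega), Nat.add_sub_cancel_left],
    by rwa [List.getElem?_append_right (by omega), Nat.add_sub_cancel_left]⟩

theorem satisfies_append_of_mem (hs : s ∈ a) (ht : t ∈ b) : Satisfies (a ++ b) s t := by
  obtain ⟨i, hi, rfl⟩ := List.mem_iff_getElem.1 hs
  obtain ⟨j, hj, rfl⟩ := List.mem_iff_getElem.1 ht
  exact ⟨i, a.length + j, by omega,
    by rw [List.getElem?_append_left hi, List.getElem?_eq_getElem hi],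
    by rw [List.getElem?_append_right (by omega), Nat.add_sub_cancel_left,
      List.getElem?_eq_getElem hj]⟩

theorem satisfies_of_mem_of_getLast? (hs : s ∈ l) (ht : l.getLast? = some t) :
    Satisfies l s t := by
  obtain ⟨i, hi, rfl⟩ := List.mem_iff_getElem.1 hs
  exact ⟨i, l.length - 1, by omega, by simp, by rw [← List.getLast?_eq_getElem?, ht]⟩

theorem satisfies_append_tail (h : a.getLast? = b.head?) (hs : s ∈ a) (ht : t ∈ b) :
    Satisfies (a ++ b.tail) s t := by
  cases b with
  | nil => simp at ht
  | cons x b =>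
    rcases List.mem_cons.1 ht with rfl | ht
    · exact (satisfies_of_mem_of_getLast? hs h).append_right _
    · exact satisfies_append_of_mem hs ht

theorem Satisfies.append_tail (hst : Satisfies b s t) (h : a.getLast? = b.head?) :
    Satisfies (a ++ b.tail) s t := by
  rw [append_tail_eq_dropLast_append h]
  exact hst.append_left _

theorem satisfies_drop {d i j : ℕ} (hdi : d ≤ i) (hij : i ≤ j) (hi : l[i]? = some s)
    (hj : l[j]? = some t) : Satisfies (l.drop d) s t :=
  ⟨i - d, j - d, by omega, by rwa [List.getElem?_drop, Nat.add_sub_cancel' hdi],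
    by rwa [List.getElem?_drop, Nat.add_sub_cancel' (hdi.trans hij)]⟩

theorem Satisfies.left_mem (h : Satisfies l s t) : s ∈ l :=
  let ⟨_, _, _, hi, _⟩ := h; List.mem_of_getElem? hi

theorem Satisfies.right_mem (h : Satisfies l s t) : t ∈ l :=
  let ⟨_, _, _, _, hj⟩ := h; List.mem_of_getElem? hj

end Satisfies

def UnitSteps (f : ℕ → ℕ) (k : ℕ) : Prop :=
  ∀ p < k, f (p + 1) = f p + 1 ∨ f p = f (p + 1) + 1

namespace UnitSteps

variable {f : ℕ → ℕ} {i j k v : ℕ}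

theorem mono (hf : UnitSteps f k) (hjk : j ≤ k) : UnitSteps f j :=
  fun p hp => hf p (by omega)

theorem exists_eq (hf : UnitSteps f j) (hij : i ≤ j) (hv : v ∈ Set.uIcc (f i) (f j)) :
    ∃ p, i ≤ p ∧ p ≤ j ∧ f p = v := by
  induction j, hij using Nat.le_induction with
  | base => exact ⟨i, le_rfl, le_rfl, (Set.mem_singleton_iff.1 (by simpa using hv)).symm⟩
  | succ j hij ih =>
    by_cases hvj : v ∈ Set.uIcc (f i) (f j)
    · obtain ⟨p, hip, hpj, hp⟩ := ih (hf.mono (by omega)) hvj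
      exact ⟨p, hip, by omega, hp⟩
    · rw [Set.mem_uIcc] at hv hvj
      exact ⟨j + 1, by omega, le_rfl, by rcases hf j (by omega) with h | h <;> omega⟩

theorem le_of_forall_ne (hf : UnitSteps f k) (hi : f i ≤ v)
    (hfirst : ∀ p, i ≤ p → p < k → f p ≠ v) {j : ℕ} (hij : i ≤ j) (hjk : j ≤ k) : f j ≤ v := by
  by_contra! hj
  obtain ⟨p, hip, hpj, hp⟩ := (hf.mono hjk).exists_eq hij (Set.mem_uIcc.2 (Or.inl ⟨hi, hj.le⟩))
  rcases Nat.lt_or_ge p k with hpk | hpk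
  · exact hfirst p hip hpk hp
  · obtain rfl : p = j := by omega
    omega

end UnitSteps

def pathDist (w : ℕ → ℕ → ℚ) (x y : ℕ) : ℚ :=
  ∑ k ∈ Finset.Ico (min x y) (max x y), w k (k + 1)

section PathDist

variable {w : ℕ → ℕ → ℚ} {x y z : ℕ}

theorem pathDist_comm (w : ℕ → ℕ → ℚ) (x y : ℕ) : pathDist w x y = pathDist w y x := by
  simp only [pathDist, min_comm, max_comm]

theorem pathDist_add_pathDist (hxy : x ≤ y) (hyz : y ≤ z) :
    pathDist w x y + pathDist w y z = pathDist w x z := by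
  simp only [pathDist, min_eq_left hxy, max_eq_right hxy, min_eq_left hyz, max_eq_right hyz,
    min_eq_left (hxy.trans hyz), max_eq_right (hxy.trans hyz)]
  exact Finset.sum_Ico_consecutive _ hxy hyz

theorem pathDist_le_add (hw : ∀ a b, 0 ≤ w a b) (x y z : ℕ) :
    pathDist w x z ≤ pathDist w x y + pathDist w y z := by
  set A := Finset.Ico (min x y) (max x y)
  set B := Finset.Ico (min y z) (max y z)
  have hsub : Finset.Ico (min x z) (max x z) ⊆ A ∪ B := by
    intro k
    simp only [A, B, Finset.mem_union, Finset.mem_Ico]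
    omega
  calc pathDist w x z ≤ ∑ k ∈ A ∪ B, w k (k + 1) :=
        Finset.sum_le_sum_of_subset_of_nonneg hsub fun _ _ _ => hw _ _
    _ ≤ ∑ k ∈ A ∪ B, w k (k + 1) + ∑ k ∈ A ∩ B, w k (k + 1) :=
        le_add_of_nonneg_right (Finset.sum_nonneg fun _ _ => hw _ _)
    _ = pathDist w x y + pathDist w y z := Finset.sum_union_inter

theorem pathDist_of_adj (hsym : ∀ a b, w a b = w b a) (h : y = x + 1 ∨ x = y + 1) :
    pathDist w x y = w x y := by
  rcases h with rfl | rfl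
  · simp [pathDist]
  · simp [pathDist, hsym]

theorem UnitSteps.pathDist_le_sum (hw : ∀ a b, 0 ≤ w a b) (hsym : ∀ a b, w a b = w b a)
    {f : ℕ → ℕ} {i j : ℕ} (hf : UnitSteps f j) (hij : i ≤ j) :
    pathDist w (f i) (f j) ≤ ∑ p ∈ Finset.Ico i j, w (f p) (f (p + 1)) := by
  induction j, hij using Nat.le_induction with
  | base => simp [pathDist]
  | succ j hij ih =>
    rw [Finset.sum_Ico_succ_top hij, ← pathDist_of_adj hsym (hf j (by omega))]
    exact (pathDist_le_add hw _ (f j) _).trans (by linarith [ih (hf.mono (by omega))])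

end PathDist

theorem UnitSteps.pathDist_add_two_mul_le_sum {w : ℕ → ℕ → ℚ} (hw : ∀ a b, 0 ≤ w a b)
    (hsym : ∀ a b, w a b = w b a) {f : ℕ → ℕ} {a l j m d : ℕ} (hf : UnitSteps f d)
    (hal : a ≤ l) (hlj : l ≤ j) (hjm : j ≤ m) (hmd : m ≤ d)
    (h0a : f 0 ≤ f a) (hla : f l ≤ f a) (haj : f a ≤ f j) (hma : f m = f a) (hdj : f d = f j) :
    pathDist w (f 0) (f d) + 2 * pathDist w (f l) (f d) ≤
      ∑ p ∈ Finset.range d, w (f p) (f (p + 1)) := by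
  have walk : ∀ {i k}, i ≤ k → k ≤ d →
      pathDist w (f i) (f k) ≤ ∑ p ∈ Finset.Ico i k, w (f p) (f (p + 1)) :=
    fun hik hkd => (hf.mono hkd).pathDist_le_sum hw hsym hik
  have h₁ := walk (Nat.zero_le a) (by omega)
  have h₂ := walk hal (by omega)
  have h₃ := walk hlj (by omega)
  have h₄ := walk hjm hmd
  have h₅ := walk hmd le_rfl
  rw [pathDist_comm w (f a) (f l)] at h₂
  rw [hma, pathDist_comm w (f j) (f a)] at h₄
  rw [hma, hdj] at h₅
  rw [hdj, Finset.range_eq_Ico, ← Finset.sum_Ico_consecutive _ (Nat.zero_le a) (by omega : a ≤ d),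
    ← Finset.sum_Ico_consecutive _ hal (by omega : l ≤ d),
    ← Finset.sum_Ico_consecutive _ hlj (by omega : j ≤ d),
    ← Finset.sum_Ico_consecutive _ hjm hmd]
  linarith [pathDist_add_pathDist (w := w) h0a haj, pathDist_add_pathDist (w := w) hla haj]

section Segments

variable {n x y z : ℕ}

theorem seg_of_le (h : x ≤ y) : seg x y = List.range' x (y - x + 1) := by
  rw [seg, if_pos h, List.range_eq_range', List.map_add_range', Nat.add_zero]

theorem seg_of_ge (h : y ≤ x) : seg x y = (List.range' y (x - y + 1)).reverse := by
  rcases h.eq_or_lt with rfl | hlt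
  · simp [seg]
  · rw [seg, if_neg (by omega), List.reverse_range']
    refine List.map_congr_left fun k _ => ?_
    omega

theorem head?_seg (x y : ℕ) : (seg x y).head? = some x := by
  rcases le_total x y with h | h
  · rw [seg_of_le h, List.range'_succ]; rfl
  · rw [seg_of_ge h, List.head?_reverse, List.getLast?_range', if_neg (by omega)]
    congr 1; omega

theorem getLast?_seg (x y : ℕ) : (seg x y).getLast? = some y := by
  rcases le_total x y with h | h
  · rw [seg_of_le h, List.getLast?_range', if_neg (by omega)]
    congr 1; omega
  · rw [seg_of_ge h, List.getLast?_reverse, List.range'_succ]; rfl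

theorem seg_ne_nil (x y : ℕ) : seg x y ≠ [] :=
  fun h => by simpa [h] using head?_seg x y

theorem mem_seg : z ∈ seg x y ↔ min x y ≤ z ∧ z ≤ max x y := by
  rcases le_total x y with h | h
  · rw [seg_of_le h, List.mem_range'_1]; omega
  · rw [seg_of_ge h, List.mem_reverse, List.mem_range'_1]; omega

theorem cost_range' (w : ℕ → ℕ → ℚ) (x m : ℕ) :
    cost w (List.range' x (m + 1)) = ∑ k ∈ Finset.Ico x (x + m), w k (k + 1) := by
  induction m generalizing x with
  | zero => simp [cost]
  | succ m ih =>
    have hcons : cost w (List.range' x (m + 2)) =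
        w x (x + 1) + cost w (List.range' (x + 1) (m + 1)) := by
      rw [List.range'_succ, List.range'_succ]; rfl
    rw [hcons, ih, Finset.sum_eq_sum_Ico_succ_bot (show x < x + (m + 1) by omega),
      show x + (m + 1) = x + 1 + m by omega]

theorem cost_seg {w : ℕ → ℕ → ℚ} (hsym : ∀ a b, w a b = w b a) (x y : ℕ) :
    cost w (seg x y) = pathDist w x y := by
  rcases le_total x y with h | h
  · rw [seg_of_le h, cost_range', pathDist, min_eq_left h, max_eq_right h, Nat.add_sub_cancel' h]
  · rw [seg_of_ge h, cost_reverse hsym, cost_range', pathDist, min_eq_right h, max_eq_left h,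
      Nat.add_sub_cancel' h]

theorem isChain_seg (hx : x ∈ Set.Icc 1 n) (hy : y ∈ Set.Icc 1 n) :
    (seg x y).IsChain (pathAdj n) := by
  rcases le_total x y with h | h
  · rw [seg_of_le h]
    refine (List.isChain_range' x _ 1).imp_of_mem_imp fun a b ha hb hab => ?_
    simp only [List.mem_range'_1, Set.mem_Icc] at ha hb hx hy
    exact ⟨Or.inl hab, by omega, by omega, by omega, by omega⟩
  · rw [seg_of_ge h, List.isChain_reverse]
    refine (List.isChain_range' y _ 1).imp_of_mem_imp fun a b ha hb hab => ?_
    simp only [List.mem_range'_1, Set.mem_Icc] at ha hb hx hy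
    exact ⟨Or.inr hab, by omega, by omega, by omega, by omega⟩

end Segments

section RideThrough

variable {n : ℕ}

theorem head?_rideThrough (x : ℕ) (ws : List ℕ) : (rideThrough (x :: ws)).head? = some x := by
  cases ws with
  | nil => rfl
  | cons y ws => simp [rideThrough, List.head?_append_of_ne_nil _ (seg_ne_nil x y), head?_seg]

theorem seg_getLast?_eq_rideThrough_head? (x y : ℕ) (ws : List ℕ) :
    (seg x y).getLast? = (rideThrough (y :: ws)).head? := by
  rw [getLast?_seg, head?_rideThrough]

theorem getLast?_rideThrough : ∀ ws : List ℕ, (rideThrough ws).getLast? = ws.getLast?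
  | [] | [_] => rfl
  | x :: y :: ws => by
    rw [rideThrough, getLast?_append_tail (seg_getLast?_eq_rideThrough_head? x y ws),
      getLast?_rideThrough (y :: ws), List.getLast?_cons_cons]

theorem isChain_rideThrough : ∀ {ws : List ℕ}, (∀ x ∈ ws, x ∈ Set.Icc 1 n) →
    (rideThrough ws).IsChain (pathAdj n)
  | [], _ | [_], _ => by simp [rideThrough]
  | x :: y :: ws, h => by
    rw [rideThrough]
    refine isChain_append_tail (seg_getLast?_eq_rideThrough_head? x y ws)
      (isChain_seg (h x (by simp)) (h y (by simp))) (isChain_rideThrough fun z hz => h z ?_)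
    exact List.mem_cons_of_mem x hz

theorem cost_rideThrough_cons_cons {w : ℕ → ℕ → ℚ} (hsym : ∀ a b, w a b = w b a)
    (x y : ℕ) (ws : List ℕ) :
    cost w (rideThrough (x :: y :: ws)) = pathDist w x y + cost w (rideThrough (y :: ws)) := by
  rw [rideThrough, cost_append_tail w (seg_getLast?_eq_rideThrough_head? x y ws), cost_seg hsym]

theorem satisfies_rideThrough {s t x y z u : ℕ} (hs : s ∈ seg y z) (ht : t ∈ seg z u) :
    Satisfies (rideThrough [x, y, z, u]) s t := by
  have hsplit : rideThrough [x, y, z, u] = rideThrough [x, y, z] ++ (seg z u).tail := by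
    simp [rideThrough, seg_ne_nil]
  rw [hsplit]
  refine satisfies_append_tail (by rw [getLast?_rideThrough, head?_seg]; rfl) ?_ ht
  rw [rideThrough, append_tail_eq_dropLast_append (seg_getLast?_eq_rideThrough_head? x y [z])]
  exact List.mem_append_right _ (by simpa [rideThrough] using hs)

theorem cost_rideThrough_out_and_back {w : ℕ → ℕ → ℚ} (hsym : ∀ a b, w a b = w b a)
    (x y z : ℕ) : cost w (rideThrough [x, y, z, y]) = pathDist w x y + 2 * pathDist w z y := by
  rw [cost_rideThrough_cons_cons hsym, cost_rideThrough_cons_cons hsym,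
    cost_rideThrough_cons_cons hsym, pathDist_comm w y z]
  simp only [rideThrough, cost]
  ring

end RideThrough

theorem rconcat_eq_append_tail {a b : List ℕ} {x : ℕ} (ha : a.getLast? = some x)
    (hb : b.head? = some x) : rconcat a b = a ++ b.tail := by
  rw [rconcat, List.getLastD_eq_getLast?, ha, List.headD_eq_head?, hb]
  simp [seg]

theorem fst_mem_VC {C : Finset (ℕ × ℕ)} {r : ℕ × ℕ} (hr : r ∈ C) : r.1 ∈ VC C :=
  Finset.mem_union_left _ (Finset.mem_image_of_mem _ hr)

theorem snd_mem_VC {C : Finset (ℕ × ℕ)} {r : ℕ × ℕ} (hr : r ∈ C) : r.2 ∈ VC C :=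
  Finset.mem_union_right _ (Finset.mem_image_of_mem _ hr)

theorem Feasible.mem_of_mem_VC {R : Scenario} {π : List ℕ} (hπ : Feasible R π) {v : ℕ}
    (hv : v ∈ VC R.C) : v ∈ π := by
  simp only [VC, Finset.mem_union, Finset.mem_image] at hv
  rcases hv with ⟨r, hr, rfl⟩ | ⟨r, hr, rfl⟩
  · exact (hπ.2.2.2 r hr).left_mem
  · exact (hπ.2.2.2 r hr).right_mem

theorem head?_drop_eq_getD {π : List ℕ} {d : ℕ} (hd : d < π.length) :
    (π.drop d).head? = some (π.getD d 0) := by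
  rw [List.head?_drop, List.getElem?_eq_getElem hd, List.getD_eq_getElem _ _ hd]

theorem Feasible.append_tail_drop {R : Scenario} {π P : List ℕ} {d L M : ℕ}
    (hπ : Feasible R π) (hd : d < π.length) (hM : π.getD d 0 = M)
    (hle : ∀ i ≤ d, π.getD i 0 ≤ M) (hP : P.IsChain R.adj) (hPh : P.head? = some R.s0)
    (hPl : P.getLast? = some M)
    (hPsat : ∀ s t, L ≤ s → s ≤ M → L ≤ t → t ≤ M → Satisfies P s t)
    (hC : ∀ r ∈ R.C, L ≤ r.1 ∧ L ≤ r.2) :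
    Feasible R (P ++ (π.drop d).tail) := by
  obtain ⟨⟨-, hchain⟩, -, hlast, hsat⟩ := hπ
  have hglue : P.getLast? = (π.drop d).head? := by rw [hPl, head?_drop_eq_getD hd, hM]
  have hgt : ∀ {i v}, π[i]? = some v → M < v → d < i := fun {i v} hi hv => by
    by_contra! hid
    have := hle i hid
    rw [List.getD_eq_getElem?_getD, hi, Option.getD_some] at this
    omega
  refine ⟨⟨fun hnil => ?_, isChain_append_tail hglue hP (hchain.drop d)⟩,
    (head?_append_tail hglue).trans hPh, ?_, fun r hr => ?_⟩
  · simp [List.append_eq_nil_iff.1 hnil] at hPh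
  · rw [getLast?_append_tail hglue, List.getLast?_drop, if_neg (by omega)]
    exact hlast
  · obtain ⟨i, j, hij, hi, hj⟩ := hsat r hr
    obtain ⟨hLs, hLt⟩ := hC r hr
    by_cases hs : r.1 ≤ M
    · by_cases ht : r.2 ≤ M
      · exact (hPsat _ _ hLs hs hLt ht).append_right _
      · refine satisfies_append_tail hglue (hPsat _ _ hLs hs hLs hs).left_mem ?_
        have hdj := hgt hj (not_le.1 ht)
        exact List.mem_of_getElem? (i := j - d)
          (by rwa [List.getElem?_drop, Nat.add_sub_cancel' hdj.le])
    · exact (satisfies_drop (hgt hi (not_le.1 hs)).le hij hi hj).append_tail hglue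

theorem cost_append_tail_drop_le {w : ℕ → ℕ → ℚ} {π P : List ℕ} {d : ℕ} (hd : d < π.length)
    (hglue : P.getLast? = (π.drop d).head?) (hP : cost w P ≤ cost w (π.take (d + 1))) :
    cost w (P ++ (π.drop d).tail) ≤ cost w π := by
  have hπ : (π.take (d + 1)).getLast? = (π.drop d).head? := by
    rw [getLast?_take_succ hd, List.head?_drop, List.getElem?_eq_getElem hd]
  have hsplit : cost w π = cost w (π.take (d + 1)) + cost w (π.drop d) := by
    rw [← cost_append_tail w hπ, List.tail_drop, List.take_append_drop]
  rw [cost_append_tail w hglue, hsplit]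
  linarith

section Landmarks

variable {n L Rt : ℕ} {π : List ℕ}

theorem unitSteps_getD (hπ : π.IsChain (pathAdj n)) : UnitSteps (π.getD · 0) (π.length - 1) := by
  intro p hp
  have := (List.isChain_iff_getElem.1 hπ p (by omega)).1
  simp only [List.getD_eq_getElem _ _ (show p < π.length by omega),
    List.getD_eq_getElem _ _ (show p + 1 < π.length by omega)]
  omega

theorem mem_Icc_of_isChain_pathAdj (hπ : π.IsChain (pathAdj n)) (hlen : 2 ≤ π.length) {x : ℕ}
    (hx : x ∈ π) : x ∈ Set.Icc 1 n := by
  obtain ⟨i, hi, rfl⟩ := List.mem_iff_getElem.1 hx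
  rcases Nat.lt_or_ge (i + 1) π.length with hi' | hi'
  · obtain ⟨-, h1, h2, -⟩ := List.isChain_iff_getElem.1 hπ i hi'
    exact ⟨h1, h2⟩
  · obtain ⟨-, -, -, h1, h2⟩ := List.isChain_iff_getElem.1 hπ (i - 1) (by omega)
    simp only [Nat.sub_add_cancel (show 1 ≤ i by omega)] at h1 h2
    exact ⟨h1, h2⟩

theorem rm_eq_foldr_max_take_drop :
    rm π L = ((π.drop 0).take (leftIdx π L - 0 + 1)).foldr max 0 := by
  simp [rm]

theorem getD_le_rm (hL : L ∈ π) {q : ℕ} (hq : q ≤ leftIdx π L) : π.getD q 0 ≤ rm π L := by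
  rw [rm_eq_foldr_max_take_drop]
  exact getD_le_foldr_max_take_drop (Nat.zero_le q) hq (List.idxOf_lt_length_iff.2 hL)

theorem exists_getD_eq_rm (hL : L ∈ π) : ∃ a ≤ leftIdx π L, π.getD a 0 = rm π L := by
  obtain ⟨a, -, ha, hfa⟩ :=
    exists_getD_eq_foldr_max_take_drop (Nat.zero_le _) (List.idxOf_lt_length_iff.2 hL)
  exact ⟨a, ha, hfa.trans rm_eq_foldr_max_take_drop.symm⟩

end Landmarks

theorem rmLastIdx_le_idxOf (π : List ℕ) (L Rt : ℕ) : rmLastIdx π L Rt ≤ π.idxOf Rt :=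
  Nat.sub_le _ _

theorem leftIdx_le_rmIdx (π : List ℕ) (L : ℕ) : leftIdx π L ≤ rmIdx π L :=
  Nat.le_add_right _ _

theorem rmLastIdx_le_rmHatIdx (π : List ℕ) (L Rt : ℕ) : rmLastIdx π L Rt ≤ rmHatIdx π L Rt :=
  Nat.le_add_right _ _

structure VisitsLeftFirst (n L Rt : ℕ) (π : List ℕ) : Prop where
  isChain : π.IsChain (pathAdj n)
  left_mem : L ∈ π
  right_mem : Rt ∈ π
  left_le_right : L ≤ Rt
  leftIdx_lt : leftIdx π L < π.idxOf Rt

namespace VisitsLeftFirst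

variable {n L Rt : ℕ} {π : List ℕ}

theorem idxOf_right_lt_length (h : VisitsLeftFirst n L Rt π) : π.idxOf Rt < π.length :=
  List.idxOf_lt_length_iff.2 h.right_mem

theorem unitSteps (h : VisitsLeftFirst n L Rt π) : UnitSteps (π.getD · 0) (π.idxOf Rt) :=
  (unitSteps_getD h.isChain).mono (by have := h.idxOf_right_lt_length; omega)

theorem getD_leftIdx (h : VisitsLeftFirst n L Rt π) : π.getD (leftIdx π L) 0 = L :=
  getD_idxOf_of_mem h.left_mem

theorem getD_idxOf_right (h : VisitsLeftFirst n L Rt π) : π.getD (π.idxOf Rt) 0 = Rt :=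
  getD_idxOf_of_mem h.right_mem

theorem getD_le_right (h : VisitsLeftFirst n L Rt π) {j : ℕ} (hj : j ≤ π.idxOf Rt) :
    π.getD j 0 ≤ Rt := by
  have hl := h.leftIdx_lt
  have hr := h.idxOf_right_lt_length
  by_contra! hgt
  -- between `j` and `leftIdx π L` the walk takes the value `Rt`, first taken at `π.idxOf Rt`
  obtain ⟨p, hp₁, hp₂, hp⟩ : ∃ p, min j (leftIdx π L) ≤ p ∧ p ≤ max j (leftIdx π L) ∧
      π.getD p 0 = Rt := by
    rcases le_total j (leftIdx π L) with hjl | hlj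
    · obtain ⟨p, hp⟩ := (h.unitSteps.mono hl.le).exists_eq hjl
        (Set.mem_uIcc.2 (Or.inr ⟨h.getD_leftIdx.trans_le h.left_le_right, hgt.le⟩))
      exact ⟨p, by omega⟩
    · obtain ⟨p, hp⟩ := (h.unitSteps.mono hj).exists_eq hlj
        (Set.mem_uIcc.2 (Or.inl ⟨h.getD_leftIdx.trans_le h.left_le_right, hgt.le⟩))
      exact ⟨p, by omega⟩
  have hrp := idxOf_le_of_getD_eq (by omega) hp
  obtain rfl : p = j := by omega
  omega

theorem rm_le_right (h : VisitsLeftFirst n L Rt π) : rm π L ≤ Rt := by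
  obtain ⟨a, ha, hfa⟩ := exists_getD_eq_rm h.left_mem
  exact hfa ▸ h.getD_le_right (ha.trans h.leftIdx_lt.le)

theorem exists_getD_eq_rm_after_leftIdx (h : VisitsLeftFirst n L Rt π) :
    ∃ p, leftIdx π L ≤ p ∧ p ≤ π.idxOf Rt ∧ π.getD p 0 = rm π L :=
  h.unitSteps.exists_eq h.leftIdx_lt.le <| Set.mem_uIcc.2 <| Or.inl
    ⟨getD_le_rm h.left_mem le_rfl, h.rm_le_right.trans_eq h.getD_idxOf_right.symm⟩

theorem rmIdx_le (h : VisitsLeftFirst n L Rt π) : rmIdx π L ≤ π.idxOf Rt := by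
  obtain ⟨p, hlp, hpr, hp⟩ := h.exists_getD_eq_rm_after_leftIdx
  exact (add_idxOf_drop_le hlp (hpr.trans_lt h.idxOf_right_lt_length) hp).trans hpr

theorem getD_rmIdx (h : VisitsLeftFirst n L Rt π) : π.getD (rmIdx π L) 0 = rm π L := by
  obtain ⟨p, hlp, hpr, hp⟩ := h.exists_getD_eq_rm_after_leftIdx
  exact getD_add_idxOf_drop hlp (hpr.trans_lt h.idxOf_right_lt_length) hp

theorem getD_le_rm_of_le_rmIdx (h : VisitsLeftFirst n L Rt π) {i : ℕ} (hli : leftIdx π L ≤ i)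
    (hi : i ≤ rmIdx π L) : π.getD i 0 ≤ rm π L := by
  refine (h.unitSteps.mono h.rmIdx_le).le_of_forall_ne (getD_le_rm h.left_mem le_rfl)
    (fun p hlp hp hfp => ?_) hli hi
  have := add_idxOf_drop_le hlp (hp.trans_le h.rmIdx_le |>.trans h.idxOf_right_lt_length) hfp
  exact absurd hp (not_lt.2 this)

theorem rmIdx_le_rmLastIdx (h : VisitsLeftFirst n L Rt π) : rmIdx π L ≤ rmLastIdx π L Rt :=
  le_sub_idxOf_reverse_take h.rmIdx_le h.idxOf_right_lt_length h.getD_rmIdx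

theorem getD_rmLastIdx (h : VisitsLeftFirst n L Rt π) : π.getD (rmLastIdx π L Rt) 0 = rm π L :=
  getD_sub_idxOf_reverse_take h.rmIdx_le h.idxOf_right_lt_length h.getD_rmIdx

theorem getD_le_rmHat (h : VisitsLeftFirst n L Rt π) {q : ℕ} (h₁ : rmIdx π L ≤ q)
    (h₂ : q ≤ rmLastIdx π L Rt) : π.getD q 0 ≤ rmHat π L Rt :=
  getD_le_foldr_max_take_drop h₁ h₂ ((rmLastIdx_le_idxOf π L Rt).trans_lt h.idxOf_right_lt_length)

theorem exists_getD_eq_rmHat (h : VisitsLeftFirst n L Rt π) :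
    ∃ j, rmIdx π L ≤ j ∧ j ≤ rmLastIdx π L Rt ∧ π.getD j 0 = rmHat π L Rt :=
  exists_getD_eq_foldr_max_take_drop h.rmIdx_le_rmLastIdx
    ((rmLastIdx_le_idxOf π L Rt).trans_lt h.idxOf_right_lt_length)

theorem rm_le_rmHat (h : VisitsLeftFirst n L Rt π) : rm π L ≤ rmHat π L Rt :=
  h.getD_rmIdx ▸ h.getD_le_rmHat le_rfl h.rmIdx_le_rmLastIdx

theorem rmHat_le_right (h : VisitsLeftFirst n L Rt π) : rmHat π L Rt ≤ Rt := by
  obtain ⟨j, -, hj, hfj⟩ := h.exists_getD_eq_rmHat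
  exact hfj ▸ h.getD_le_right (hj.trans (rmLastIdx_le_idxOf π L Rt))

theorem exists_getD_eq_rmHat_after_rmLastIdx (h : VisitsLeftFirst n L Rt π) :
    ∃ p, rmLastIdx π L Rt ≤ p ∧ p ≤ π.idxOf Rt ∧ π.getD p 0 = rmHat π L Rt :=
  (h.unitSteps).exists_eq (rmLastIdx_le_idxOf π L Rt) <| Set.mem_uIcc.2 <| Or.inl
    ⟨h.getD_rmLastIdx.trans_le h.rm_le_rmHat, h.rmHat_le_right.trans_eq h.getD_idxOf_right.symm⟩

theorem rmHatIdx_le (h : VisitsLeftFirst n L Rt π) : rmHatIdx π L Rt ≤ π.idxOf Rt := by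
  obtain ⟨p, hlp, hpr, hp⟩ := h.exists_getD_eq_rmHat_after_rmLastIdx
  exact (add_idxOf_drop_le hlp (hpr.trans_lt h.idxOf_right_lt_length) hp).trans hpr

theorem getD_rmHatIdx (h : VisitsLeftFirst n L Rt π) :
    π.getD (rmHatIdx π L Rt) 0 = rmHat π L Rt := by
  obtain ⟨p, hlp, hpr, hp⟩ := h.exists_getD_eq_rmHat_after_rmLastIdx
  exact getD_add_idxOf_drop hlp (hpr.trans_lt h.idxOf_right_lt_length) hp

theorem getD_le_rmHat_of_le_rmHatIdx (h : VisitsLeftFirst n L Rt π) {i : ℕ}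
    (hi : i ≤ rmHatIdx π L Rt) : π.getD i 0 ≤ rmHat π L Rt := by
  rcases le_total i (leftIdx π L) with hil | hli
  · exact (getD_le_rm h.left_mem hil).trans h.rm_le_rmHat
  rcases le_total i (rmIdx π L) with hi₁ | hi₁
  · exact (h.getD_le_rm_of_le_rmIdx hli hi₁).trans h.rm_le_rmHat
  rcases le_total i (rmLastIdx π L Rt) with hi₂ | hi₂
  · exact h.getD_le_rmHat hi₁ hi₂
  refine (h.unitSteps.mono h.rmHatIdx_le).le_of_forall_ne
    (h.getD_rmLastIdx ▸ h.rm_le_rmHat) (fun p hlp hp hfp => ?_) hi₂ hi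
  have := add_idxOf_drop_le hlp (hp.trans_le h.rmHatIdx_le |>.trans h.idxOf_right_lt_length) hfp
  exact absurd hp (not_lt.2 this)

theorem pathDist_add_two_mul_le_cost_take (h : VisitsLeftFirst n L Rt π) {w : ℕ → ℕ → ℚ}
    (hw : ∀ a b, 0 ≤ w a b) (hsym : ∀ a b, w a b = w b a) :
    pathDist w (π.getD 0 0) (rmHat π L Rt) + 2 * pathDist w L (rmHat π L Rt) ≤
      cost w (π.take (rmHatIdx π L Rt + 1)) := by
  obtain ⟨a, ha, hfa⟩ := exists_getD_eq_rm h.left_mem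
  obtain ⟨j, hj₁, hj₂, hfj⟩ := h.exists_getD_eq_rmHat
  have key := (h.unitSteps.mono h.rmHatIdx_le).pathDist_add_two_mul_le_sum hw hsym ha
    ((leftIdx_le_rmIdx π L).trans hj₁) hj₂ (rmLastIdx_le_rmHatIdx π L Rt)
    (hfa ▸ getD_le_rm h.left_mem (Nat.zero_le _)) (hfa ▸ getD_le_rm h.left_mem le_rfl)
    (hfa.trans_le (h.rm_le_rmHat.trans_eq hfj.symm)) (h.getD_rmLastIdx.trans hfa.symm)
    (h.getD_rmHatIdx.trans hfj.symm)
  rw [h.getD_leftIdx, h.getD_rmHatIdx] at key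
  rwa [cost_take_succ w (h.rmHatIdx_le.trans_lt h.idxOf_right_lt_length)]

theorem head?_drop_rmHatIdx (h : VisitsLeftFirst n L Rt π) :
    (π.drop (rmHatIdx π L Rt)).head? = some (rmHat π L Rt) := by
  rw [head?_drop_eq_getD (h.rmHatIdx_le.trans_lt h.idxOf_right_lt_length), h.getD_rmHatIdx]

theorem feasible_rideThrough_append_tail_drop {w : ℕ → ℕ → ℚ} {s0 t0 : ℕ}
    {C : Finset (ℕ × ℕ)} (h : VisitsLeftFirst n L Rt π)
    (hπ : Feasible ⟨pathAdj n, w, s0, t0, C⟩ π) (hL : ∀ v ∈ VC C, L ≤ v) :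
    Feasible ⟨pathAdj n, w, s0, t0, C⟩
      (rideThrough [s0, rmHat π L Rt, L, rmHat π L Rt] ++ (π.drop (rmHatIdx π L Rt)).tail) := by
  have hLM : L ≤ rmHat π L Rt :=
    (h.getD_leftIdx.symm.trans_le (getD_le_rm h.left_mem le_rfl)).trans h.rm_le_rmHat
  have hIcc : ∀ x ∈ π, x ∈ Set.Icc 1 n := fun x => mem_Icc_of_isChain_pathAdj h.isChain
    (by have := h.leftIdx_lt; have := h.idxOf_right_lt_length; omega)
  have hMπ : rmHat π L Rt ∈ π := List.mem_of_mem_drop (List.mem_of_mem_head? h.head?_drop_rmHatIdx)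
  refine hπ.append_tail_drop (h.rmHatIdx_le.trans_lt h.idxOf_right_lt_length) h.getD_rmHatIdx
    (fun _ => h.getD_le_rmHat_of_le_rmHatIdx) (isChain_rideThrough fun x hx => ?_)
    (head?_rideThrough _ _) (getLast?_rideThrough _)
    (fun s t hs₁ hs₂ ht₁ ht₂ => satisfies_rideThrough (mem_seg.2 (by omega)) (mem_seg.2 (by omega)))
    (fun r hr => ⟨hL _ (fst_mem_VC hr), hL _ (snd_mem_VC hr)⟩)
  simp only [List.mem_cons, List.not_mem_nil, or_false] at hx
  rcases hx with rfl | rfl | rfl | rfl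
  exacts [hIcc _ (List.mem_of_mem_head? hπ.2.1), hIcc _ hMπ, hIcc _ h.left_mem, hIcc _ hMπ]

theorem cost_rideThrough_append_tail_drop_le {w : ℕ → ℕ → ℚ} {s0 : ℕ}
    (h : VisitsLeftFirst n L Rt π) (hw : ∀ a b, 0 ≤ w a b) (hsym : ∀ a b, w a b = w b a)
    (hs0 : π.head? = some s0) :
    cost w (rideThrough [s0, rmHat π L Rt, L, rmHat π L Rt] ++ (π.drop (rmHatIdx π L Rt)).tail) ≤
      cost w π := by
  have hs0' : π.getD 0 0 = s0 := by
    rw [List.getD_eq_getElem?_getD, ← List.head?_eq_getElem?, hs0, Option.getD_some]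
  refine cost_append_tail_drop_le (h.rmHatIdx_le.trans_lt h.idxOf_right_lt_length)
    ((getLast?_rideThrough _).trans h.head?_drop_rmHatIdx.symm) ?_
  rw [cost_rideThrough_out_and_back hsym, ← hs0']
  exact h.pathDist_add_two_mul_le_cost_take hw hsym

end VisitsLeftFirst

/-- if `π` is optimal with `leftIdx(π) < rightIdx(π)`, then the ride
`s₀ ↦ r̂m(π) ↦ left(R) ↦ r̂m(π)` followed by `π[r̂mIdx(π), len(π)]` is optimal, too. -/
theorem prefix_normalization_optimal (n : ℕ) (w : ℕ → ℕ → ℚ)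
    (hwsym : ∀ a b, w a b = w b a) (hwpos : ∀ a b, 0 < w a b)
    (s0 t0 : ℕ) (C : Finset (ℕ × ℕ)) (L Rt : ℕ)
    (hL : IsLeast {v | v ∈ VC C} L) (hR : IsGreatest {v | v ∈ VC C} Rt)
    (π : List ℕ) (hopt : Optimal ⟨pathAdj n, w, s0, t0, C⟩ π)
    (hlr : leftIdx π L < π.idxOf Rt) :
    Optimal ⟨pathAdj n, w, s0, t0, C⟩
      (rconcat (rideThrough [s0, rmHat π L Rt, L, rmHat π L Rt])
        (π.drop (rmHatIdx π L Rt))) := by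
  obtain ⟨hfeas, hmin⟩ := hopt
  have h : VisitsLeftFirst n L Rt π :=
    ⟨hfeas.1.2, hfeas.mem_of_mem_VC hL.1, hfeas.mem_of_mem_VC hR.1, hR.2 hL.1, hlr⟩
  rw [rconcat_eq_append_tail (getLast?_rideThrough _) h.head?_drop_rmHatIdx]
  refine ⟨h.feasible_rideThrough_append_tail_drop hfeas fun v hv => hL.2 hv, fun π' hπ' => ?_⟩
  exact (h.cost_rideThrough_append_tail_drop_le (fun a b => (hwpos a b).le) hwsym hfeas.2.1).trans
    (hmin π' hπ')

end RideSharing
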